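/- Let D be a division ring with central subfield K. Suppose f ∈ D has an admissible linear system (e_1, A, v) of dimension n ≥ 2 with A = [[1, b', b],[0, B, b''],[0, 0, 1]] (first diagonal entry 1 and zero first column below it; last row e_n) and v = λ e_n with λ ∈ K, λ ≠ 0, and suppose f ≠ 0. Then the (n−1)×(n−1) matrix A' = [[−λ Σ b'', −Σ B Σ],[−λ b, −b' Σ]] is invertible over D and e_1 (A')⁻¹ e_{n−1} = f⁻¹, where Σ is the permutation matrix reversing the order of rows/columns (of size n−2). -/

import Mathlib

/-!
Write `A⁻¹` in blocks. Since the first column of `A` is `e₁` and its last row is `eₙ`, the middle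
block of `A⁻¹` is `B⁻¹`, and the corner entry `(A⁻¹)₁ₙ` is `b' B⁻¹ b'' - b`, so `f = λ (b' B⁻¹ b'' - b)`.
Up to reordering rows and columns, `A'` is the block matrix `-[[B, λ b''], [b', λ b]]`, whose
Schur complement with respect to `-B` is exactly `f`. Since `f ≠ 0`, the Schur complement formula
inverts `A'`, and the corner of the inverse is the inverse of the Schur complement.
-/

open Matrix

namespace Matrix

variable {R : Type*} [Ring R] {m n : Type*} [Fintype m] [Fintype n] [DecidableEq m] [DecidableEq n]

def schurBlockInv (Q : Matrix m m R) (B : Matrix m n R) (C : Matrix n m R) (T : Matrix n n R) :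
    Matrix (m ⊕ n) (m ⊕ n) R :=
  fromBlocks (Q + Q * B * T * C * Q) (-(Q * B * T)) (-(T * C * Q)) T

variable {P Q : Matrix m m R} {B : Matrix m n R} {C : Matrix n m R} {D T : Matrix n n R}

theorem fromBlocks_mul_schurBlockInv (hPQ : P * Q = 1) (hST : (D - C * Q * B) * T = 1) :
    fromBlocks P B C D * schurBlockInv Q B C T = 1 := by
  rw [Matrix.sub_mul] at hST
  rw [schurBlockInv, fromBlocks_multiply, ← fromBlocks_one]
  simp only [Matrix.mul_add, Matrix.mul_neg, ← Matrix.mul_assoc, hPQ, Matrix.one_mul]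
  congr 1
  · abel
  · abel
  · calc C * Q + C * Q * B * T * C * Q + -(D * T * C * Q)
        = C * Q - (D * T - C * Q * B * T) * C * Q := by
          simp only [Matrix.sub_mul]; abel
      _ = 0 := by rw [hST, Matrix.one_mul, sub_self]
  · rw [← hST]; abel

theorem schurBlockInv_mul_fromBlocks (hQP : Q * P = 1) (hTS : T * (D - C * Q * B) = 1) :
    schurBlockInv Q B C T * fromBlocks P B C D = 1 := by
  simp only [Matrix.mul_sub, Matrix.mul_assoc] at hTS
  rw [schurBlockInv, fromBlocks_multiply, ← fromBlocks_one]
  simp only [Matrix.add_mul, Matrix.neg_mul, Matrix.mul_assoc, hQP, Matrix.mul_one]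
  congr 1
  · abel
  · calc Q * B + Q * (B * (T * (C * (Q * B)))) + -(Q * (B * (T * D)))
        = Q * B - Q * (B * (T * D - T * (C * (Q * B)))) := by
          simp only [Matrix.mul_sub]; abel
      _ = 0 := by rw [hTS, Matrix.mul_one, sub_self]
  · abel
  · rw [← hTS]; abel

theorem submatrix_equiv_mul_submatrix_equiv_eq_one {l o : Type*} [Fintype o] [DecidableEq l]
    {M N : Matrix n n R} (h : M * N = 1) (e₁ : l ≃ n) (e₂ : o ≃ n) :
    M.submatrix e₁ e₂ * N.submatrix e₂ e₁ = 1 := by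
  rw [submatrix_mul_equiv, h, submatrix_one_equiv]

theorem of_const_mul_of_const_inv {K ι : Type*} [DivisionRing K] [Fintype ι] [DecidableEq ι]
    [Unique ι] {a : K} (ha : a ≠ 0) :
    (of fun _ _ => a : Matrix ι ι K) * of (fun _ _ => a⁻¹) = 1 := by
  ext i j
  obtain rfl := Subsingleton.elim i j
  simp [mul_apply, ha]

end Matrix

section TypeOneOne

variable {R : Type*} [Ring R] {n : Type*}

def typeOneOneMatrix (b' : n → R) (b : R) (B : Matrix n n R) (b'' : n → R) :
    Matrix (Fin 1 ⊕ n ⊕ Fin 1) (Fin 1 ⊕ n ⊕ Fin 1) R :=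
  of fun i j =>
    match i, j with
    | .inl _, .inl _ => 1
    | .inl _, .inr (.inl j) => b' j
    | .inl _, .inr (.inr _) => b
    | .inr (.inl _), .inl _ => 0
    | .inr (.inl i), .inr (.inl j) => B i j
    | .inr (.inl i), .inr (.inr _) => b'' i
    | .inr (.inr _), .inl _ => 0
    | .inr (.inr _), .inr (.inl _) => 0
    | .inr (.inr _), .inr (.inr _) => 1

variable [Fintype n] {b' : n → R} {b : R} {B : Matrix n n R} {b'' : n → R}

theorem schurComplement_neg_typeOneOne {K ι : Type*} [CommSemiring K] [Algebra K R] (lam : K)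
    (Bi : Matrix n n R) :
    (of fun _ _ => -(lam • b) : Matrix ι ι R) -
        -replicateRow ι b' * -Bi * -replicateCol ι (lam • b'') =
      of fun _ _ => lam • (b' ⬝ᵥ Bi *ᵥ b'' - b) := by
  simp only [Matrix.neg_mul, Matrix.mul_neg, neg_neg, sub_neg_eq_add]
  rw [Matrix.mul_assoc, ← replicateCol_mulVec, replicateRow_mul_replicateCol, mulVec_smul,
    dotProduct_smul]
  ext
  simp only [Matrix.add_apply, of_apply, smul_sub]
  abel

variable [DecidableEq n] {X : Matrix (Fin 1 ⊕ n ⊕ Fin 1) (Fin 1 ⊕ n ⊕ Fin 1) R}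

theorem mul_middleBlock_eq_one (h : typeOneOneMatrix b' b B b'' * X = 1) :
    B * X.submatrix (Sum.inr ∘ Sum.inl) (Sum.inr ∘ Sum.inl) = 1 := by
  have hlast : ∀ j, X (.inr (.inr 0)) (.inr (.inl j)) = 0 := fun j => by
    simpa [typeOneOneMatrix, mul_apply, Fintype.sum_sum_type] using
      congrFun (congrFun h (.inr (.inr 0))) (.inr (.inl j))
  ext i j
  simpa [typeOneOneMatrix, mul_apply, Fintype.sum_sum_type, hlast, one_apply] using
    congrFun (congrFun h (.inr (.inl i))) (.inr (.inl j))

theorem middleBlock_mul_eq_one (h : X * typeOneOneMatrix b' b B b'' = 1) :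
    X.submatrix (Sum.inr ∘ Sum.inl) (Sum.inr ∘ Sum.inl) * B = 1 := by
  have hfirst : ∀ i, X (.inr (.inl i)) (.inl 0) = 0 := fun i => by
    simpa [typeOneOneMatrix, mul_apply, Fintype.sum_sum_type] using
      congrFun (congrFun h (.inr (.inl i))) (.inl 0)
  ext i j
  simpa [typeOneOneMatrix, mul_apply, Fintype.sum_sum_type, hfirst, one_apply] using
    congrFun (congrFun h (.inr (.inl i))) (.inr (.inl j))

theorem corner_eq_of_mul_eq_one (h : typeOneOneMatrix b' b B b'' * X = 1)
    (hl : X.submatrix (Sum.inr ∘ Sum.inl) (Sum.inr ∘ Sum.inl) * B = 1) :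
    X (.inl 0) (.inr (.inr 0)) =
      b' ⬝ᵥ (X.submatrix (Sum.inr ∘ Sum.inl) (Sum.inr ∘ Sum.inl) *ᵥ b'') - b := by
  set y : n → R := fun i => X (.inr (.inl i)) (.inr (.inr 0))
  have hcorner : X (.inr (.inr 0)) (.inr (.inr 0)) = 1 := by
    simpa [typeOneOneMatrix, mul_apply, Fintype.sum_sum_type] using
      congrFun (congrFun h (.inr (.inr 0))) (.inr (.inr 0))
  have hmid : B *ᵥ y + b'' = 0 := by
    ext i
    simpa [typeOneOneMatrix, mul_apply, Fintype.sum_sum_type, hcorner, mulVec, dotProduct, y]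
      using congrFun (congrFun h (.inr (.inl i))) (.inr (.inr 0))
  have htop : X (.inl 0) (.inr (.inr 0)) + b' ⬝ᵥ y + b = 0 := by
    simpa [typeOneOneMatrix, mul_apply, Fintype.sum_sum_type, hcorner, dotProduct, y,
      add_assoc] using congrFun (congrFun h (.inl 0)) (.inr (.inr 0))
  have hy : y = -(X.submatrix (Sum.inr ∘ Sum.inl) (Sum.inr ∘ Sum.inl) *ᵥ b'') := by
    rw [← mulVec_neg, ← eq_neg_of_add_eq_zero_left hmid, mulVec_mulVec, hl, one_mulVec]
  rw [hy, dotProduct_neg] at htop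
  rw [← sub_eq_zero, ← htop]
  abel

end TypeOneOne

theorem stmt14 {K D : Type*} [Field K] [DivisionRing D] [Algebra K D] {m : ℕ}
    (b' : Fin m → D) (b : D) (B : Matrix (Fin m) (Fin m) D) (b'' : Fin m → D)
    (A Ainv : Matrix (Fin 1 ⊕ Fin m ⊕ Fin 1) (Fin 1 ⊕ Fin m ⊕ Fin 1) D)
    (hAdef : A = Matrix.of fun i j : Fin 1 ⊕ Fin m ⊕ Fin 1 =>
      match i, j with
      | .inl _, .inl _ => (1 : D)
      | .inl _, .inr (.inl j) => b' j
      | .inl _, .inr (.inr _) => b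
      | .inr (.inl _), .inl _ => 0
      | .inr (.inl i), .inr (.inl j) => B i j
      | .inr (.inl i), .inr (.inr _) => b'' i
      | .inr (.inr _), .inl _ => 0
      | .inr (.inr _), .inr (.inl _) => 0
      | .inr (.inr _), .inr (.inr _) => 1)
    (hA : A * Ainv = 1 ∧ Ainv * A = 1)
    (lam : K)
    (v : Matrix (Fin 1 ⊕ Fin m ⊕ Fin 1) (Fin 1) D)
    (hv : ∀ i, v i 0 = if i = Sum.inr (Sum.inr 0) then algebraMap K D lam else 0)
    (f : D) (hf : f = (Ainv * v) (Sum.inl 0) 0) (hf0 : f ≠ 0)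
    (A' : Matrix (Fin m ⊕ Fin 1) (Fin 1 ⊕ Fin m) D)
    (hA' : A' = Matrix.of fun i j =>
      match i, j with
      | .inl i, .inl _ => -(algebraMap K D lam * b'' i.rev)
      | .inl i, .inr j => -(B i.rev j.rev)
      | .inr _, .inl _ => -(algebraMap K D lam * b)
      | .inr _, .inr j => -(b' j.rev)) :
    ∃ C : Matrix (Fin 1 ⊕ Fin m) (Fin m ⊕ Fin 1) D,
      A' * C = 1 ∧ C * A' = 1 ∧ C (Sum.inl 0) (Sum.inr 0) = f⁻¹ := by
  obtain ⟨hAX, hXA⟩ := hA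
  have hA1 : A = typeOneOneMatrix b' b B b'' := by
    subst hAdef; ext (i | i | i) (j | j | j) <;> rfl
  rw [hA1] at hAX hXA
  set Bi := Ainv.submatrix (Sum.inr ∘ Sum.inl) (Sum.inr ∘ Sum.inl)
  have hBiB : Bi * B = 1 := middleBlock_mul_eq_one hXA
  have hfs : f = lam • (b' ⬝ᵥ Bi *ᵥ b'' - b) := by
    rw [hf, ← corner_eq_of_mul_eq_one hAX hBiB, Algebra.smul_def, Algebra.commutes]
    simp [mul_apply, hv]
  set e₁ : Fin m ⊕ Fin 1 ≃ Fin m ⊕ Fin 1 := Equiv.sumCongr Fin.revPerm (Equiv.refl _)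
  set e₂ : Fin 1 ⊕ Fin m ≃ Fin m ⊕ Fin 1 := (Equiv.sumComm _ _).trans e₁
  set N := fromBlocks (-B) (-replicateCol (Fin 1) (lam • b'')) (-replicateRow (Fin 1) b')
    (of fun _ _ => -(lam • b))
  have hA'N : A' = N.submatrix e₁ e₂ := by
    subst hA'; ext (i | i) (j | j) <;> simp [N, e₁, e₂, Algebra.smul_def]
  set T : Matrix (Fin 1) (Fin 1) D := of fun _ _ => f⁻¹
  refine ⟨(schurBlockInv (-Bi) (-replicateCol (Fin 1) (lam • b''))
    (-replicateRow (Fin 1) b') T).submatrix e₂ e₁, ?_, ?_, ?_⟩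
  · refine hA'N ▸ submatrix_equiv_mul_submatrix_equiv_eq_one
      (fromBlocks_mul_schurBlockInv ?_ ?_) e₁ e₂
    · rw [neg_mul_neg, mul_middleBlock_eq_one hAX]
    · rw [schurComplement_neg_typeOneOne, ← hfs]; exact of_const_mul_of_const_inv hf0
  · refine hA'N ▸ submatrix_equiv_mul_submatrix_equiv_eq_one
      (schurBlockInv_mul_fromBlocks ?_ ?_) e₂ e₁
    · rw [neg_mul_neg, hBiB]
    · rw [schurComplement_neg_typeOneOne, ← hfs]; simpa using of_const_mul_of_const_inv (inv_ne_zero hf0)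
  · simp [schurBlockInv, e₁, e₂, T]
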